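/- arXiv:2312.17302 — 4 statements merged into one kernel-verified Lean document; each statement's English description precedes it below -/
import Mathlib

section
/- Let F be a field, n ≥ 2 a natural number, and suppose F contains a primitive n-th root of unity. Then for any s ∈ F, the polynomial X^n − s is irreducible in F[X] if and only if for every divisor m of n with m ≠ 1, s is not an m-th power in F (i.e., there is no u ∈ F with u^m = s). -/
/-!
If `g` is an irreducible factor of `X ^ n - C s` of degree `d`, taking norms from `F[X]/(g)`
of a root `α` with `α ^ n = s` gives `N(α) ^ n = s ^ d`. With a primitive `n`-th root of unity
in `F`, extracting `gcd(n, d)`-th roots and using that `n / gcd(n, d)` and `d / gcd(n, d)` are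
coprime shows that `s` is an `n / gcd(n, d)`-th power; so `d < n` is only possible if `s` is an
`m`-th power for some divisor `m ≠ 1` of `n`.
-/

open Polynomial

theorem IsPrimitiveRoot.exists_eq_pow_mul_of_pow_eq_pow {R : Type*} [CommRing R] [IsDomain R]
    {e : ℕ} {η x y : R} (hη : IsPrimitiveRoot η e) (he : 0 < e) (h : x ^ e = y ^ e) :
    ∃ i, x = η ^ i * y := by
  have hx : x ∈ nthRoots e (y ^ e) := (mem_nthRoots he).2 h
  rw [hη.nthRoots_eq rfl, Multiset.mem_map] at hx
  obtain ⟨i, -, hi⟩ := hx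
  exact ⟨i, hi.symm⟩

theorem IsPrimitiveRoot.exists_pow_div_gcd_eq_of_pow_eq_pow {F : Type*} [Field F]
    {n d : ℕ} {ζ c s : F} (hζ : IsPrimitiveRoot ζ n) (hn : 0 < n) (h : c ^ n = s ^ d) :
    ∃ u : F, u ^ (n / n.gcd d) = s := by
  set e := n.gcd d
  set n' := n / e
  set d' := d / e
  have he : 0 < e := Nat.gcd_pos_of_pos_left d hn
  have hn' : n' * e = n := Nat.div_mul_cancel (Nat.gcd_dvd_left n d)
  have hd' : d' * e = d := Nat.div_mul_cancel (Nat.gcd_dvd_right n d)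
  have hcop : d'.Coprime n' := (Nat.coprime_div_gcd_div_gcd he).symm
  have hη : IsPrimitiveRoot (ζ ^ n') e := hζ.pow hn hn'.symm
  obtain ⟨i, hi⟩ := hη.exists_eq_pow_mul_of_pow_eq_pow he (x := c ^ n') (y := s ^ d') <| by
    rw [← pow_mul, ← pow_mul, hn', hd', h]
  have hs : s ^ d' = (c / ζ ^ i) ^ n' := by
    rw [div_pow, hi, ← pow_mul, mul_comm n' i, pow_mul,
      mul_div_cancel_left₀ _ (pow_ne_zero _ (pow_ne_zero _ (hζ.ne_zero hn.ne')))]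
  obtain ⟨u, hu⟩ := (pow_mem_range_pow_of_coprime hcop s).1 ⟨_, hs.symm⟩
  exact ⟨u, hu⟩

theorem AdjoinRoot.norm_root_pow_eq_of_dvd_X_pow_sub_C {F : Type*} [Field F] {n : ℕ} {s : F}
    {g : F[X]} (hg : g ≠ 0) (hdvd : g ∣ X ^ n - C s) :
    Algebra.norm F (root g) ^ n = s ^ g.natDegree := by
  have hroot := eval₂_eq_zero_of_dvd_of_eval₂_eq_zero _ _ hdvd (eval₂_root g)
  rw [eval₂_sub, eval₂_pow, eval₂_C, eval₂_X, sub_eq_zero] at hroot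
  rw [← map_pow, hroot, ← algebraMap_eq, Algebra.norm_algebraMap, (powerBasis hg).finrank,
    powerBasis_dim hg]

theorem X_pow_sub_C_irreducible_of_isPrimitiveRoot {F : Type*} [Field F] {n : ℕ} {ζ s : F}
    (hζ : IsPrimitiveRoot ζ n) (hn : 0 < n) (hs : ∀ m, m ∣ n → m ≠ 1 → ∀ u : F, u ^ m ≠ s) :
    Irreducible (X ^ n - C s) := by
  have hne : X ^ n - C s ≠ 0 := X_pow_sub_C_ne_zero hn s
  have hunit : ¬ IsUnit (X ^ n - C s) := by
    rw [isUnit_iff_degree_eq_zero, degree_X_pow_sub_C hn, Nat.cast_eq_zero]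
    exact hn.ne'
  obtain ⟨g, hg, hdvd⟩ := WfDvdMonoid.exists_irreducible_factor hunit hne
  have hdeg : g.natDegree ≤ n := (natDegree_le_of_dvd hdvd hne).trans_eq natDegree_X_pow_sub_C
  suffices g.natDegree = n from (associated_of_dvd_of_natDegree_le hdvd hne
    (this.trans natDegree_X_pow_sub_C.symm).ge).irreducible hg
  by_contra hlt
  have hpos : 0 < g.natDegree := natDegree_pos_iff_degree_pos.2 (degree_pos_of_irreducible hg)
  obtain ⟨u, hu⟩ := hζ.exists_pow_div_gcd_eq_of_pow_eq_pow hn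
    (AdjoinRoot.norm_root_pow_eq_of_dvd_X_pow_sub_C hg.ne_zero hdvd)
  refine hs _ (Nat.div_dvd_of_dvd (Nat.gcd_dvd_left _ _)) (fun h1 => hlt ?_) u hu
  have hgcd : n.gcd g.natDegree = n := by
    simpa [h1] using Nat.div_mul_cancel (Nat.gcd_dvd_left n g.natDegree)
  exact le_antisymm hdeg (hgcd ▸ Nat.gcd_le_right _ hpos)

/-- Let `F` be a field, `n ≥ 2`, and suppose `F` contains a primitive `n`-th
root of unity `q`. Then for any `s ∈ F`, the polynomial `X^n − s` is irreducible over `F` iff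
for every divisor `m` of `n` with `m ≠ 1`, `s` is not an `m`-th power in `F`. -/
theorem stmt_0 (F : Type*) [Field F] (n : ℕ) (hn : 2 ≤ n) (q : F)
    (hq : IsPrimitiveRoot q n) (s : F) :
    Irreducible (X ^ n - C s : F[X]) ↔
      ∀ m : ℕ, m ∣ n → m ≠ 1 → ¬ ∃ u : F, u ^ m = s := by
  refine ⟨fun H m hm hm1 ⟨u, hu⟩ => pow_ne_of_irreducible_X_pow_sub_C H hm hm1 u hu,
    fun H => X_pow_sub_C_irreducible_of_isPrimitiveRoot hq (by omega)
      fun m hm hm1 u hu => H m hm hm1 ⟨u, hu⟩⟩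
end

section
/- Let F be a field, n ≥ 2, q ∈ F a primitive n-th root of unity, and s, a ∈ F. Let 𝓔 = (E(s), σ, a) be the F-algebra generated by h and x subject to x·h = q·h·x, h^n = s, x^n = a. Then 𝓔 is a simple ring if and only if s ≠ 0 and a ≠ 0. Moreover, if s ≠ 0 and a ≠ 0, then 𝓔 is a central simple F-algebra of degree n: the center of 𝓔 is F·1 and dim_F 𝓔 = n². -/
/-!
The monomials `hⁱ xʲ` (`0 ≤ i, j < n`) span `𝓔`. They are linearly independent because `𝓔` acts on
`F[θ]/(θⁿ - s) ⊗ F[θ]/(θⁿ - a)`, with `h` acting as `θ ⊗ 1` and `x` as `σ ⊗ θ`, where `σ θ = q θ`;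
this action sends `hⁱ xʲ` to the basis vector `θⁱ ⊗ θʲ`. Hence `dim 𝓔 = n²`.

If `s, a ≠ 0` then `h` and `x` are units, and conjugation by them is diagonal on the monomials,
with eigenvalues `qʲ` and `qⁱ`; as `q` is primitive these pairs separate the monomials. Since `n`
is invertible in `F`, averaging powers of a conjugation projects onto an eigenspace, so a two-sided
ideal contains every monomial component of each of its elements. A nonzero component is a unit, so
`𝓔` is simple; a central element is fixed by both conjugations, so it is a multiple of `1`.

If `s = 0` (resp. `a = 0`) then `h` (resp. `x`) is a nonzero nilpotent element with `h 𝓔 ⊆ 𝓔 h`, so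
`𝓔 h` is a proper nonzero ideal.
-/

/-- The defining relations of the algebra `𝓔 = (E(s), σ, a)`: it is generated over `F` by
`h` (the generator `ι F 0`) and `x` (the generator `ι F 1`) subject to
`x·h = q·h·x`, `h^n = s`, `x^n = a`. -/
inductive CERel (F : Type) [Field F] (n : ℕ) (q s a : F) :
    FreeAlgebra F (Fin 2) → FreeAlgebra F (Fin 2) → Prop
  | comm : CERel F n q s a (FreeAlgebra.ι F (1 : Fin 2) * FreeAlgebra.ι F (0 : Fin 2))
      (algebraMap F (FreeAlgebra F (Fin 2)) q *
        (FreeAlgebra.ι F (0 : Fin 2) * FreeAlgebra.ι F (1 : Fin 2)))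
  | hpow : CERel F n q s a (FreeAlgebra.ι F (0 : Fin 2) ^ n)
      (algebraMap F (FreeAlgebra F (Fin 2)) s)
  | xpow : CERel F n q s a (FreeAlgebra.ι F (1 : Fin 2) ^ n)
      (algebraMap F (FreeAlgebra F (Fin 2)) a)

/-- The algebra `𝓔 = (E(s), σ, a)`: the quotient of the free `F`-algebra `F⟨h,x⟩` by the
two-sided ideal generated by `x·h − q·h·x`, `h^n − s`, `x^n − a`. -/
abbrev CE (F : Type) [Field F] (n : ℕ) (q s a : F) : Type := RingQuot (CERel F n q s a)

noncomputable def CEh (F : Type) [Field F] (n : ℕ) (q s a : F) : CE F n q s a :=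
  RingQuot.mkAlgHom F (CERel F n q s a) (FreeAlgebra.ι F (0 : Fin 2))

noncomputable def CEx (F : Type) [Field F] (n : ℕ) (q s a : F) : CE F n q s a :=
  RingQuot.mkAlgHom F (CERel F n q s a) (FreeAlgebra.ι F (1 : Fin 2))

open scoped TensorProduct

section Diagonal

variable {F M ι : Type*} [Field F] [AddCommGroup M] [Module F M]

theorem Module.Basis.repr_apply_of_apply_basis_eq_smul (b : Module.Basis ι F M)
    {N : Module.End F M} {w : ι → F} (hN : ∀ i, N (b i) = w i • b i) (z : M) (i : ι) :
    b.repr (N z) i = w i * b.repr z i := by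
  have : (Finsupp.lapply i ∘ₗ b.repr.toLinearMap) ∘ₗ N = w i • Finsupp.lapply i ∘ₗ b.repr :=
    b.ext fun j => by
      rcases eq_or_ne j i with rfl | _ <;> simp [*]
  simpa using LinearMap.congr_fun this z

theorem Module.Basis.repr_pow_apply_of_apply_basis_eq_smul (b : Module.Basis ι F M)
    {N : Module.End F M} {w : ι → F} (hN : ∀ i, N (b i) = w i • b i) (r : ℕ) (z : M) (i : ι) :
    b.repr ((N ^ r) z) i = w i ^ r * b.repr z i := by
  induction r with
  | zero => simp
  | succ r ih =>
    rw [pow_succ', Module.End.mul_apply, b.repr_apply_of_apply_basis_eq_smul hN, ih, pow_succ',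
      mul_assoc]

/-- The projection onto the `u`-eigenspace when `N` is diagonal with `n`-th roots of unity as
eigenvalues and `n` is invertible. -/
noncomputable def eigenAverage (N : Module.End F M) (n : ℕ) (u : F) : Module.End F M :=
  (n : F)⁻¹ • ∑ r ∈ Finset.range n, u⁻¹ ^ r • N ^ r

theorem geom_sum_eq_ite_of_pow_eq_one {n : ℕ} {u : F} (hu : u ^ n = 1) [DecidableEq F] :
    ∑ r ∈ Finset.range n, u ^ r = if u = 1 then (n : F) else 0 := by
  split_ifs with h
  · simp [h]
  · simpa [hu, sub_eq_zero, h] using geom_sum_mul u n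

theorem Module.Basis.repr_eigenAverage (b : Module.Basis ι F M) {N : Module.End F M}
    {w : ι → F} (hN : ∀ i, N (b i) = w i • b i) {n : ℕ} (hn : (n : F) ≠ 0)
    (hw : ∀ i, w i ^ n = 1) {u : F} (hu : u ^ n = 1) [DecidableEq F] (z : M) (i : ι) :
    b.repr (eigenAverage N n u z) i = if w i = u then b.repr z i else 0 := by
  have hu0 : u ≠ 0 := by
    rintro rfl
    exact hn (by simp_all [zero_pow_eq])
  have hsum : ∑ r ∈ Finset.range n, (u⁻¹ * w i) ^ r = if w i = u then (n : F) else 0 := by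
    rw [geom_sum_eq_ite_of_pow_eq_one (by rw [mul_pow, inv_pow, hu, hw, inv_one, one_mul])]
    simp only [inv_mul_eq_one₀ hu0, eq_comm]
  simp only [eigenAverage, LinearMap.smul_apply, LinearMap.sum_apply, map_smul, map_sum,
    Finsupp.smul_apply, Finsupp.finsetSum_apply, b.repr_pow_apply_of_apply_basis_eq_smul hN,
    smul_eq_mul, ← mul_assoc, ← mul_pow, ← Finset.sum_mul, hsum]
  split_ifs <;> simp [hn]

theorem Submodule.eigenAverage_mem (p : Submodule F M) {N : Module.End F M}
    (hN : ∀ z ∈ p, N z ∈ p) (n : ℕ) (u : F) {z : M} (hz : z ∈ p) :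
    eigenAverage N n u z ∈ p := by
  have hpow : ∀ r : ℕ, (N ^ r) z ∈ p := fun r => by
    induction r with
    | zero => simpa using hz
    | succ r ih => rw [pow_succ', Module.End.mul_apply]; exact hN _ ih
  simp only [eigenAverage, LinearMap.smul_apply, LinearMap.sum_apply]
  exact p.smul_mem _ (p.sum_mem fun r _ => p.smul_mem _ (hpow r))

end Diagonal

theorem IsSimpleRing.eq_zero_of_isNilpotent {R : Type*} [Ring R] [IsSimpleRing R] {c : R}
    (hnormal : ∀ v, ∃ v', c * v = v' * c) (hc : IsNilpotent c) : c = 0 := by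
  let I : TwoSidedIdeal R := .mk' (Set.range fun v => v * c) ⟨0, zero_mul c⟩
    (by rintro _ _ ⟨v, rfl⟩ ⟨w, rfl⟩; exact ⟨v + w, add_mul v w c⟩)
    (by rintro _ ⟨v, rfl⟩; exact ⟨-v, neg_mul v c⟩)
    (by rintro u _ ⟨v, rfl⟩; exact ⟨u * v, mul_assoc u v c⟩)
    (by rintro _ u ⟨v, rfl⟩; obtain ⟨u', hu'⟩ := hnormal u
        exact ⟨v * u', by simp only [mul_assoc, hu']⟩)
  have hcI : c ∈ I := (TwoSidedIdeal.mem_mk' _ _ _ _ _ _ _).2 ⟨1, one_mul c⟩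
  by_contra hc0
  obtain ⟨w, hw : w * c = 1⟩ :=
    (TwoSidedIdeal.mem_mk' _ _ _ _ _ _ _).1 (one_mem_of_ne_zero_mem I hc0 hcI)
  have hpow : ∀ k, w ^ k * c ^ k = 1 := fun k => by
    induction k with
    | zero => simp
    | succ k ih => rw [pow_succ, pow_succ', mul_assoc, ← mul_assoc w, hw, one_mul, ih]
  obtain ⟨k, hk⟩ := hc
  simpa [hk] using hpow k

theorem Algebra.exists_mul_eq_mul_of_adjoin_eq_top {F A : Type*} [CommSemiring F] [Semiring A]
    [Algebra F A] {S : Set A} (hS : Algebra.adjoin F S = ⊤) {c : A}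
    (hc : ∀ g ∈ S, ∃ g', c * g = g' * c) (v : A) : ∃ v', c * v = v' * c := by
  induction (hS ▸ Algebra.mem_top : v ∈ Algebra.adjoin F S) using Algebra.adjoin_induction with
  | mem g hg => exact hc g hg
  | algebraMap r => exact ⟨algebraMap F A r, (Algebra.commutes r c).symm⟩
  | add v w _ _ hv hw =>
    obtain ⟨v', hv'⟩ := hv; obtain ⟨w', hw'⟩ := hw
    exact ⟨v' + w', by rw [mul_add, hv', hw', add_mul]⟩
  | mul v w _ _ hv hw =>
    obtain ⟨v', hv'⟩ := hv; obtain ⟨w', hw'⟩ := hw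
    exact ⟨v' * w', by rw [← mul_assoc, hv', mul_assoc, hw', mul_assoc]⟩

section QCommute

variable {R A : Type*} [CommSemiring R] [Semiring A] [Algebra R A]

theorem pow_mul_pow_of_mul_eq_smul_mul {x y : A} {q : R} (h : y * x = q • (x * y)) (j k : ℕ) :
    y ^ j * x ^ k = q ^ (j * k) • (x ^ k * y ^ j) := by
  have hk : ∀ k : ℕ, y * x ^ k = q ^ k • (x ^ k * y) := fun k => by
    induction k with
    | zero => simp
    | succ k ih =>
      rw [pow_succ, ← mul_assoc, ih, smul_mul_assoc, mul_assoc, h, mul_smul_comm, smul_smul,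
        ← mul_assoc, ← pow_succ, ← pow_succ]
  induction j with
  | zero => simp
  | succ j ih =>
    rw [pow_succ, mul_assoc, hk, mul_smul_comm, ← mul_assoc, ih, smul_mul_assoc, smul_smul,
      mul_assoc, ← pow_succ, ← pow_add, Nat.succ_mul, add_comm (j * k)]

theorem pow_eq_smul_pow_mod {x : A} {n : ℕ} {c : R} (h : x ^ n = algebraMap R A c) (m : ℕ) :
    x ^ m = c ^ (m / n) • x ^ (m % n) := by
  conv_lhs => rw [← Nat.div_add_mod m n, pow_add, pow_mul, h, ← map_pow, ← Algebra.smul_def]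

end QCommute

open Polynomial in
abbrev RootAlg (F : Type) [Field F] (n : ℕ) (c : F) : Type := AdjoinRoot (X ^ n - C c : F[X])

namespace RootAlg

open Polynomial

variable {F : Type} [Field F] {n : ℕ} {c : F}

theorem root_pow : (AdjoinRoot.root _ : RootAlg F n c) ^ n = algebraMap F _ c := by
  have := AdjoinRoot.eval₂_root (X ^ n - C c : F[X])
  rwa [eval₂_sub, eval₂_pow, eval₂_X, eval₂_C, sub_eq_zero, ← AdjoinRoot.algebraMap_eq] at this

theorem mulLeft_root_pow :
    LinearMap.mulLeft F (AdjoinRoot.root _ : RootAlg F n c) ^ n = algebraMap F _ c := by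
  rw [LinearMap.pow_mulLeft, root_pow, Module.algebraMap_end_eq_smul_id]
  ext; simp [Algebra.smul_def]

noncomputable def basis [NeZero n] : Module.Basis (Fin n) F (RootAlg F n c) :=
  (AdjoinRoot.powerBasis' (monic_X_pow_sub_C c (NeZero.ne n))).basis.reindex
    (finCongr (natDegree_X_pow_sub_C (n := n) (r := c)))

theorem basis_apply [NeZero n] (i : Fin n) :
    (basis i : RootAlg F n c) = AdjoinRoot.root _ ^ (i : ℕ) := by
  simp [basis]
  rfl

noncomputable def scaleRoot {q : F} (hq : q ^ n = 1) : RootAlg F n c →ₐ[F] RootAlg F n c :=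
  AdjoinRoot.liftAlgHom _ (Algebra.ofId F _) (q • AdjoinRoot.root _) <| by
    rw [eval₂_sub, eval₂_pow, eval₂_X, eval₂_C, _root_.smul_pow, root_pow, hq, one_smul,
      sub_eq_zero]
    rfl

variable {q : F} (hq : q ^ n = 1)

theorem scaleRoot_root : scaleRoot hq (AdjoinRoot.root _ : RootAlg F n c) = q • AdjoinRoot.root _ :=
  AdjoinRoot.liftAlgHom_root _ _ _ _

theorem scaleRoot_pow : (scaleRoot hq : RootAlg F n c →ₐ[F] RootAlg F n c) ^ n = 1 := by
  have : ∀ k : ℕ,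
      (scaleRoot hq ^ k) (AdjoinRoot.root _ : RootAlg F n c) = q ^ k • AdjoinRoot.root _ :=
    fun k => by
      induction k with
      | zero => simp
      | succ k ih =>
        rw [pow_succ', AlgHom.mul_apply, ih, map_smul, scaleRoot_root, smul_smul, pow_succ]
  exact AdjoinRoot.algHom_ext (by rw [this, hq, one_smul]; rfl)

theorem scaleRoot_mul_mulLeft_root :
    (scaleRoot hq).toLinearMap * LinearMap.mulLeft F (AdjoinRoot.root _ : RootAlg F n c) =
      q • (LinearMap.mulLeft F (AdjoinRoot.root _ : RootAlg F n c) *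
        (scaleRoot hq).toLinearMap) := by
  ext y
  simp [scaleRoot_root]

theorem scaleRoot_toLinearMap_pow :
    (scaleRoot hq : RootAlg F n c →ₐ[F] _).toLinearMap ^ n = 1 := by
  rw [← AlgHom.toEnd_apply, ← map_pow, scaleRoot_pow, map_one]

end RootAlg

section CEAlgebra

variable {F : Type} [Field F] {n : ℕ} {q s a : F}

local notation "𝐡" => CEh F n q s a
local notation "𝐱" => CEx F n q s a

theorem CEx_mul_CEh : 𝐱 * 𝐡 = q • (𝐡 * 𝐱) := by
  simpa [CEx, CEh, Algebra.smul_def] using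
    RingQuot.mkAlgHom_rel F (CERel.comm (n := n) (s := s) (a := a))

theorem CEh_pow : 𝐡 ^ n = algebraMap F _ s := by
  simpa [CEh] using
    RingQuot.mkAlgHom_rel F (CERel.hpow (F := F) (n := n) (q := q) (s := s) (a := a))

theorem CEx_pow : 𝐱 ^ n = algebraMap F _ a := by
  simpa [CEx] using
    RingQuot.mkAlgHom_rel F (CERel.xpow (F := F) (n := n) (q := q) (s := s) (a := a))

theorem adjoin_CEh_CEx : Algebra.adjoin F {𝐡, 𝐱} = ⊤ := by
  have : {𝐡, 𝐱} = RingQuot.mkAlgHom F (CERel F n q s a) '' Set.range (FreeAlgebra.ι F) := by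
    ext z
    simp [Fin.exists_fin_two, CEh, CEx, eq_comm]
  rw [this, Algebra.adjoin_image, FreeAlgebra.adjoin_range_ι, Algebra.map_top,
    AlgHom.range_eq_top]
  exact RingQuot.mkAlgHom_surjective F _

variable (F n q s a) in
noncomputable def CEmonomial (p : Fin n × Fin n) : CE F n q s a :=
  CEh F n q s a ^ (p.1 : ℕ) * CEx F n q s a ^ (p.2 : ℕ)

local notation "𝐦" => CEmonomial F n q s a

theorem CEmonomial_mul_CEh (p : Fin n × Fin n) : 𝐦 p * 𝐡 = q ^ (p.2 : ℕ) • (𝐡 * 𝐦 p) := by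
  have := pow_mul_pow_of_mul_eq_smul_mul (x := 𝐡) (y := 𝐱) CEx_mul_CEh p.2 1
  simp only [pow_one, mul_one] at this
  rw [CEmonomial, mul_assoc, this, mul_smul_comm, ← mul_assoc, ← mul_assoc, ← pow_succ, pow_succ']

theorem CEx_mul_CEmonomial (p : Fin n × Fin n) : 𝐱 * 𝐦 p = q ^ (p.1 : ℕ) • (𝐦 p * 𝐱) := by
  have := pow_mul_pow_of_mul_eq_smul_mul (x := 𝐡) (y := 𝐱) CEx_mul_CEh 1 p.1
  simp only [pow_one, one_mul] at this
  rw [CEmonomial, ← mul_assoc, this, smul_mul_assoc, mul_assoc, mul_assoc, ← pow_succ, ← pow_succ']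

theorem CEmonomial_zero [NeZero n] : 𝐦 0 = 1 := by
  simp [CEmonomial]

theorem CEmonomial_mul [NeZero n] (p r : Fin n × Fin n) :
    𝐦 p * 𝐦 r = (q ^ ((p.2 : ℕ) * r.1) * s ^ ((p.1 + r.1 : ℕ) / n) * a ^ ((p.2 + r.2 : ℕ) / n)) •
      𝐦 (p + r) := by
  simp only [CEmonomial, Prod.fst_add, Prod.snd_add, Fin.val_add]
  rw [mul_assoc, ← mul_assoc (𝐱 ^ _), pow_mul_pow_of_mul_eq_smul_mul CEx_mul_CEh, smul_mul_assoc,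
    mul_smul_comm]
  simp only [← mul_assoc, ← pow_add]
  rw [mul_assoc, ← pow_add, pow_eq_smul_pow_mod CEh_pow (p.1 + r.1 : ℕ),
    pow_eq_smul_pow_mod CEx_pow (p.2 + r.2 : ℕ), smul_mul_assoc, mul_smul_comm, smul_smul,
    smul_smul]

theorem span_range_CEmonomial [NeZero n] : Submodule.span F (Set.range 𝐦) = ⊤ := by
  set S := Submodule.span F (Set.range 𝐦)
  have hone : (1 : CE F n q s a) ∈ S := by
    rw [← CEmonomial_zero]
    exact Submodule.subset_span ⟨0, rfl⟩
  have hmul : ∀ y z, y ∈ S → z ∈ S → y * z ∈ S := fun y z hy hz => by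
    have := Submodule.mul_mem_mul hy hz
    rw [Submodule.span_mul_span] at this
    refine Submodule.span_le.2 ?_ this
    rintro _ ⟨_, ⟨p, rfl⟩, _, ⟨r, rfl⟩, rfl⟩
    change 𝐦 p * 𝐦 r ∈ S
    rw [CEmonomial_mul]
    exact S.smul_mem _ (Submodule.subset_span ⟨_, rfl⟩)
  have hgen : ∀ {g : CE F n q s a} {c : F}, g ^ n = algebraMap F _ c →
      (∀ i : Fin n, g ^ (i : ℕ) ∈ S) → g ∈ S := fun {g c} hg hpow => by
    rw [← pow_one g, pow_eq_smul_pow_mod hg]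
    exact S.smul_mem _ (hpow ⟨1 % n, Nat.mod_lt _ (NeZero.pos n)⟩)
  have hS : Algebra.adjoin F {𝐡, 𝐱} ≤ S.toSubalgebra hone hmul := by
    rw [Algebra.adjoin_le_iff, Set.insert_subset_iff, Set.singleton_subset_iff]
    exact ⟨hgen CEh_pow fun i => Submodule.subset_span ⟨(i, 0), by simp [CEmonomial]⟩,
      hgen CEx_pow fun j => Submodule.subset_span ⟨(0, j), by simp [CEmonomial]⟩⟩
  rw [adjoin_CEh_CEx] at hS
  exact eq_top_iff.2 fun z _ => hS Algebra.mem_top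

variable (s a) in
noncomputable def CErep.hOp : Module.End F (RootAlg F n s ⊗[F] RootAlg F n a) :=
  TensorProduct.map (LinearMap.mulLeft F (AdjoinRoot.root _)) 1

variable (s a) in
noncomputable def CErep.xOp (hq : q ^ n = 1) : Module.End F (RootAlg F n s ⊗[F] RootAlg F n a) :=
  TensorProduct.map (RootAlg.scaleRoot hq).toLinearMap (LinearMap.mulLeft F (AdjoinRoot.root _))

theorem CErep.xOp_mul_hOp (hq : q ^ n = 1) :
    xOp s a hq * hOp s a = q • (hOp s a * xOp s a hq) := by
  rw [xOp, hOp, ← TensorProduct.map_mul, ← TensorProduct.map_mul,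
    RootAlg.scaleRoot_mul_mulLeft_root, mul_one, one_mul, TensorProduct.map_smul_left]

theorem CErep.hOp_pow :
    hOp s a ^ n = algebraMap F (Module.End F (RootAlg F n s ⊗[F] RootAlg F n a)) s := by
  rw [hOp, TensorProduct.map_pow, RootAlg.mulLeft_root_pow, one_pow,
    Module.algebraMap_end_eq_smul_id, TensorProduct.map_smul_left, ← Module.End.one_eq_id,
    TensorProduct.map_one, Algebra.algebraMap_eq_smul_one]

theorem CErep.xOp_pow (hq : q ^ n = 1) :
    xOp s a hq ^ n = algebraMap F (Module.End F (RootAlg F n s ⊗[F] RootAlg F n a)) a := by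
  rw [xOp, TensorProduct.map_pow, RootAlg.mulLeft_root_pow, RootAlg.scaleRoot_toLinearMap_pow,
    Module.algebraMap_end_eq_smul_id, TensorProduct.map_smul_right, ← Module.End.one_eq_id,
    TensorProduct.map_one, Algebra.algebraMap_eq_smul_one]

variable (s a) in
noncomputable def CErep (hq : q ^ n = 1) :
    CE F n q s a →ₐ[F] Module.End F (RootAlg F n s ⊗[F] RootAlg F n a) :=
  RingQuot.liftAlgHom F ⟨FreeAlgebra.lift F ![CErep.hOp s a, CErep.xOp s a hq], by
    rintro _ _ (_ | _ | _) <;>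
      simp only [map_mul, map_pow, FreeAlgebra.lift_ι_apply, AlgHom.commutes,
        Matrix.cons_val_zero, Matrix.cons_val_one]
    · rw [CErep.xOp_mul_hOp, Algebra.smul_def]
    · exact CErep.hOp_pow
    · exact CErep.xOp_pow hq⟩

theorem CErep_CEmonomial_apply [NeZero n] (hq : q ^ n = 1) (p : Fin n × Fin n) :
    CErep s a hq (𝐦 p) (1 ⊗ₜ 1) = (RootAlg.basis.tensorProduct RootAlg.basis) p := by
  have hh : CErep s a hq 𝐡 = CErep.hOp s a := by simp [CErep, CEh]
  have hx : CErep s a hq 𝐱 = CErep.xOp s a hq := by simp [CErep, CEx]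
  rw [CEmonomial, map_mul, map_pow, map_pow, hh, hx, Module.End.mul_apply, CErep.xOp, CErep.hOp,
    TensorProduct.map_pow, TensorProduct.map_pow, TensorProduct.map_tmul, TensorProduct.map_tmul,
    Module.Basis.tensorProduct_apply, ← AlgHom.toEnd_apply, ← map_pow, AlgHom.toEnd_apply,
    AlgHom.toLinearMap_apply, map_one, LinearMap.pow_mulLeft, LinearMap.pow_mulLeft, one_pow]
  simp [RootAlg.basis_apply]

theorem linearIndependent_CEmonomial [NeZero n] (hq : q ^ n = 1) : LinearIndependent F 𝐦 := by
  apply LinearIndependent.of_comp (LinearMap.applyₗ (1 ⊗ₜ 1) ∘ₗ (CErep s a hq).toLinearMap)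
  have : ⇑(LinearMap.applyₗ (1 ⊗ₜ[F] 1) ∘ₗ (CErep s a hq).toLinearMap) ∘ 𝐦 =
      RootAlg.basis.tensorProduct RootAlg.basis :=
    _root_.funext (CErep_CEmonomial_apply hq)
  rw [this]
  exact (RootAlg.basis.tensorProduct RootAlg.basis).linearIndependent

variable (F n q s a) in
noncomputable def CEbasis [NeZero n] (hq : q ^ n = 1) :
    Module.Basis (Fin n × Fin n) F (CE F n q s a) :=
  .mk (linearIndependent_CEmonomial hq) span_range_CEmonomial.ge

theorem CEbasis_apply [NeZero n] (hq : q ^ n = 1) (p : Fin n × Fin n) :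
    CEbasis F n q s a hq p = 𝐦 p :=
  Module.Basis.mk_apply _ _ _

theorem finrank_CE [NeZero n] (hq : q ^ n = 1) : Module.finrank F (CE F n q s a) = n ^ 2 := by
  simp [Module.finrank_eq_card_basis (CEbasis F n q s a hq), sq]

theorem CEh_ne_zero (hn : 2 ≤ n) (hq : q ^ n = 1) : 𝐡 ≠ 0 := by
  have : NeZero n := ⟨by omega⟩
  simpa [CEmonomial, Nat.mod_eq_of_lt hn] using
    (linearIndependent_CEmonomial (s := s) (a := a) hq).ne_zero (⟨1, hn⟩, 0)

theorem CEx_ne_zero (hn : 2 ≤ n) (hq : q ^ n = 1) : 𝐱 ≠ 0 := by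
  have : NeZero n := ⟨by omega⟩
  simpa [CEmonomial] using
    (linearIndependent_CEmonomial (s := s) (a := a) hq).ne_zero (0, ⟨1, hn⟩)

theorem exists_CEh_mul_eq_mul_CEh (hq : q ≠ 0) (v : CE F n q s a) : ∃ v', 𝐡 * v = v' * 𝐡 := by
  refine Algebra.exists_mul_eq_mul_of_adjoin_eq_top adjoin_CEh_CEx ?_ v
  rintro g (rfl | rfl)
  · exact ⟨𝐡, rfl⟩
  · exact ⟨q⁻¹ • 𝐱, by rw [smul_mul_assoc, CEx_mul_CEh, inv_smul_smul₀ hq]⟩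

theorem exists_CEx_mul_eq_mul_CEx (v : CE F n q s a) : ∃ v', 𝐱 * v = v' * 𝐱 := by
  refine Algebra.exists_mul_eq_mul_of_adjoin_eq_top adjoin_CEh_CEx ?_ v
  rintro g (rfl | rfl)
  · exact ⟨q • 𝐡, by rw [CEx_mul_CEh, smul_mul_assoc]⟩
  · exact ⟨𝐱, rfl⟩

theorem CE_not_isSimpleRing_of_left_eq_zero (hn : 2 ≤ n) (hq : q ^ n = 1) :
    ¬IsSimpleRing (CE F n q 0 a) := fun _ =>
  have hq₀ : q ≠ 0 := by rintro rfl; simp [zero_pow (by omega : n ≠ 0)] at hq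
  CEh_ne_zero (s := 0) (a := a) hn hq <|
    IsSimpleRing.eq_zero_of_isNilpotent (exists_CEh_mul_eq_mul_CEh hq₀)
      ⟨n, by rw [CEh_pow, map_zero]⟩

theorem CE_not_isSimpleRing_of_right_eq_zero (hn : 2 ≤ n) (hq : q ^ n = 1) :
    ¬IsSimpleRing (CE F n q s 0) := fun _ =>
  CEx_ne_zero (s := s) (a := 0) hn hq <|
    IsSimpleRing.eq_zero_of_isNilpotent exists_CEx_mul_eq_mul_CEx
      ⟨n, by rw [CEx_pow, map_zero]⟩

section Invertible

variable [NeZero n]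

theorem CE_nontrivial (hq : q ^ n = 1) : Nontrivial (CE F n q s a) := by
  refine nontrivial_of_ne 1 0 ?_
  rw [← CEmonomial_zero]
  exact (linearIndependent_CEmonomial hq).ne_zero 0

theorem isUnit_CEh (hs : s ≠ 0) : IsUnit 𝐡 :=
  (isUnit_pow_iff (NeZero.ne n)).1 (CEh_pow (q := q) (a := a) ▸ (Ne.isUnit hs).map _)

theorem isUnit_CEx (ha : a ≠ 0) : IsUnit 𝐱 :=
  (isUnit_pow_iff (NeZero.ne n)).1 (CEx_pow (q := q) (s := s) ▸ (Ne.isUnit ha).map _)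

theorem isUnit_CEmonomial (hs : s ≠ 0) (ha : a ≠ 0) (p : Fin n × Fin n) : IsUnit (𝐦 p) :=
  ((isUnit_CEh hs).pow _).mul ((isUnit_CEx ha).pow _)

theorem mulLeftRight_CEbasis_CEh (hq : q ^ n = 1) (hs : s ≠ 0) (p : Fin n × Fin n) :
    LinearMap.mulLeftRight F (Ring.inverse 𝐡, 𝐡) (CEbasis F n q s a hq p) =
      q ^ (p.2 : ℕ) • CEbasis F n q s a hq p := by
  rw [LinearMap.mulLeftRight_apply, CEbasis_apply, mul_assoc, CEmonomial_mul_CEh, mul_smul_comm,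
    Ring.inverse_mul_cancel_left _ _ (isUnit_CEh hs)]

theorem mulLeftRight_CEbasis_CEx (hq : q ^ n = 1) (ha : a ≠ 0) (p : Fin n × Fin n) :
    LinearMap.mulLeftRight F (𝐱, Ring.inverse 𝐱) (CEbasis F n q s a hq p) =
      q ^ (p.1 : ℕ) • CEbasis F n q s a hq p := by
  rw [LinearMap.mulLeftRight_apply, CEbasis_apply, CEx_mul_CEmonomial, smul_mul_assoc,
    Ring.mul_inverse_cancel_right _ _ (isUnit_CEx ha)]

theorem CEbasis_repr_smul_mem (hq : IsPrimitiveRoot q n) (hs : s ≠ 0) (ha : a ≠ 0)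
    (I : TwoSidedIdeal (CE F n q s a)) {z : CE F n q s a} (hz : z ∈ I) (p : Fin n × Fin n) :
    (CEbasis F n q s a hq.pow_eq_one).repr z p • 𝐦 p ∈ I := by
  classical
  set b := CEbasis F n q s a hq.pow_eq_one
  let P : Submodule F (CE F n q s a) := I.asIdeal.restrictScalars F
  have hP : ∀ {y}, y ∈ P ↔ y ∈ I := TwoSidedIdeal.mem_asIdeal
  have hconj : ∀ u v, ∀ y ∈ P, LinearMap.mulLeftRight F (u, v) y ∈ P := fun u v y hy =>
    hP.2 (I.mul_mem_right _ _ (I.mul_mem_left _ _ (hP.1 hy)))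
  have hn : (n : F) ≠ 0 := hq.neZero'.out
  have hroot : ∀ i : ℕ, (q ^ i) ^ n = 1 := fun i => by rw [pow_right_comm, hq.pow_eq_one, one_pow]
  let z₁ := eigenAverage (LinearMap.mulLeftRight F (Ring.inverse 𝐡, 𝐡)) n (q ^ (p.2 : ℕ)) z
  let z₂ := eigenAverage (LinearMap.mulLeftRight F (𝐱, Ring.inverse 𝐱)) n (q ^ (p.1 : ℕ)) z₁
  have hz₂ : z₂ ∈ P :=
    P.eigenAverage_mem (hconj _ _) _ _ (P.eigenAverage_mem (hconj _ _) _ _ (hP.2 hz))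
  have hrepr : ∀ r, b.repr z₂ r = if r = p then b.repr z p else 0 := fun r => by
    rw [b.repr_eigenAverage (mulLeftRight_CEbasis_CEx _ ha) hn (fun _ => hroot _) (hroot _),
      b.repr_eigenAverage (mulLeftRight_CEbasis_CEh _ hs) hn (fun _ => hroot _) (hroot _)]
    by_cases hr : r = p
    · simp [hr]
    · rw [if_neg hr]
      split_ifs with h₁ h₂ <;> try rfl
      exact absurd (Prod.ext (Fin.ext (hq.pow_inj r.1.2 p.1.2 h₁))
        (Fin.ext (hq.pow_inj r.2.2 p.2.2 h₂))) hr
  have : z₂ = b.repr z p • b p :=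
    b.ext_elem fun r => by simp [hrepr, Finsupp.single_apply, eq_comm]
  rw [← CEbasis_apply hq.pow_eq_one, ← this]
  exact hP.1 hz₂

theorem CE_isSimpleRing (hq : IsPrimitiveRoot q n) (hs : s ≠ 0) (ha : a ≠ 0) :
    IsSimpleRing (CE F n q s a) := by
  have := CE_nontrivial (s := s) (a := a) hq.pow_eq_one
  refine .of_eq_bot_or_eq_top fun I => or_iff_not_imp_left.2 fun hI => ?_
  obtain ⟨z, hzI, hz⟩ := SetLike.exists_of_lt (bot_lt_iff_ne_bot.2 hI)
  set b := CEbasis F n q s a hq.pow_eq_one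
  obtain ⟨p, hp⟩ : ∃ p, b.repr z p ≠ 0 := by
    by_contra! h
    exact hz ((TwoSidedIdeal.mem_bot _).2 (b.ext_elem fun p => by simp [h]))
  have hunit : IsUnit (b.repr z p • 𝐦 p) := by
    rw [Algebra.smul_def]
    exact ((Ne.isUnit hp).map _).mul (isUnit_CEmonomial hs ha p)
  rw [← I.one_mem_iff, ← hunit.unit.inv_mul]
  exact I.mul_mem_left _ _ (CEbasis_repr_smul_mem hq hs ha I hzI p)

theorem CE_center_eq_bot (hq : IsPrimitiveRoot q n) (hs : s ≠ 0) (ha : a ≠ 0) :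
    Subalgebra.center F (CE F n q s a) = ⊥ := by
  refine eq_bot_iff.2 fun z hz => ?_
  rw [Subalgebra.mem_center_iff] at hz
  set b := CEbasis F n q s a hq.pow_eq_one
  have hfix : ∀ {N : Module.End F (CE F n q s a)} {w : Fin n × Fin n → F},
      (∀ p, N (b p) = w p • b p) → N z = z → ∀ p, b.repr z p ≠ 0 → w p = 1 :=
    fun {N w} hN hNz p hp => by
      have := b.repr_apply_of_apply_basis_eq_smul hN z p
      rw [hNz] at this
      exact (mul_eq_right₀ hp).1 this.symm
  have hh := hfix (mulLeftRight_CEbasis_CEh _ hs) (by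
    rw [LinearMap.mulLeftRight_apply, mul_assoc, ← hz,
      Ring.inverse_mul_cancel_left _ _ (isUnit_CEh hs)])
  have hx := hfix (mulLeftRight_CEbasis_CEx _ ha) (by
    rw [LinearMap.mulLeftRight_apply, hz, Ring.mul_inverse_cancel_right _ _ (isUnit_CEx ha)])
  have hsupp : ∀ p, b.repr z p ≠ 0 → p = 0 := fun p hp =>
    Prod.ext (Fin.ext (hq.pow_inj p.1.2 (NeZero.pos n) (by simpa using hx p hp)))
      (Fin.ext (hq.pow_inj p.2.2 (NeZero.pos n) (by simpa using hh p hp)))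
  have : z = b.repr z 0 • b 0 :=
    b.ext_elem fun p => by
      by_cases hp : p = 0
      · simp [hp]
      · simp [Ne.symm hp, not_imp_comm.1 (hsupp p) hp]
  rw [this, CEbasis_apply, CEmonomial_zero, ← Algebra.algebraMap_eq_smul_one]
  exact Subalgebra.algebraMap_mem _ _

end Invertible

end CEAlgebra

/-- Let `F` be a field, `n ≥ 2`, `q ∈ F` a primitive `n`-th root of unity,
`s, a ∈ F`. Then `𝓔 = (E(s), σ, a)` is a simple ring iff `s ≠ 0` and `a ≠ 0`; moreover if
`s ≠ 0` and `a ≠ 0` then `𝓔` is a central simple `F`-algebra of degree `n`: its center is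
`F·1` and `dim_F 𝓔 = n²`. -/
theorem stmt_2 (F : Type) [Field F] (n : ℕ) (hn : 2 ≤ n) (q : F)
    (hq : IsPrimitiveRoot q n) (s a : F) :
    (IsSimpleRing (CE F n q s a) ↔ s ≠ 0 ∧ a ≠ 0) ∧
    (s ≠ 0 → a ≠ 0 →
      Subalgebra.center F (CE F n q s a) = ⊥ ∧
      Module.finrank F (CE F n q s a) = n ^ 2) := by
  have : NeZero n := ⟨by omega⟩
  refine ⟨⟨fun h => ⟨?_, ?_⟩, fun ⟨hs, ha⟩ => CE_isSimpleRing hq hs ha⟩,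
    fun hs ha => ⟨CE_center_eq_bot hq hs ha, finrank_CE hq.pow_eq_one⟩⟩
  · rintro rfl
    exact CE_not_isSimpleRing_of_left_eq_zero hn hq.pow_eq_one h
  · rintro rfl
    exact CE_not_isSimpleRing_of_right_eq_zero hn hq.pow_eq_one h
end

section
/- Let F be a field, n ≥ 2, q ∈ F a primitive n-th root of unity, and s, a ∈ F with s ≠ 0 and a ≠ 0. Let 𝓔 = (E(s), σ, a) be the F-algebra generated by h and x subject to x·h = q·h·x, h^n = s, x^n = a, where E(s) = F[X]/(X^n − s) is assumed to be a field, with F-algebra automorphism σ determined by σ(h) = q·h. If for every divisor d' of n with d' ≠ n the element a^{d'} is not of the form ∏_{i=0}^{n−1} σ^i(e) for any e ∈ E(s) (i.e., a^{d'} is not in the image of the field norm N_{E(s)/F}), then 𝓔 is a division ring. -/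
open Polynomial

/-!
`𝓔` is a left vector space over `E = E(s)` (acting through `h`), spanned by `1, x, …, x^{n-1}`,
and left multiplication by `x` is `σ`-semilinear with `x^n = a`. If `z ≠ 0` is not a unit,
right multiplication by `z` is not surjective, so the left ideal `𝓔 z` has dimension `0 < m < n`;
it is stable under `x`, and if `B` is the matrix of `x` on it, then
`N(det B) = det (B · σ B ⋯ σ^{n-1} B) = a^m`. Hence `a^{gcd(m, n)}` is a norm, with `gcd(m, n)`
a proper divisor of `n`. Nontriviality comes from the representation `h ↦ h₀ ∘ τ`, `x ↦ y·`
on `E[y]/(y^n - a)`, where `τ` fixes `E` and `τ y = q⁻¹ y`.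
-/

open Finset

namespace Matrix

variable {R : Type*} [CommRing R] {ι : Type*} [Fintype ι] [DecidableEq ι]

/-- `B * φ B * ⋯ * φ^[k-1] B`: the matrix of the `k`-th iterate of a `φ`-semilinear map with
matrix `B`. -/
def twistedPow (φ : R →+* R) (B : Matrix ι ι R) : ℕ → Matrix ι ι R
  | 0 => 1
  | k + 1 => B * φ.mapMatrix (twistedPow φ B k)

theorem det_twistedPow (φ : R →+* R) (B : Matrix ι ι R) (k : ℕ) :
    (twistedPow φ B k).det = ∏ i ∈ range k, φ^[i] B.det := by
  induction k with
  | zero => simp [twistedPow]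
  | succ k ih =>
    rw [twistedPow, det_mul, ← RingHom.map_det, ih, prod_range_succ', map_prod,
      Function.iterate_zero_apply, mul_comm]
    simp only [Function.iterate_succ_apply']

end Matrix

theorem Module.Basis.iterate_apply_eq_sum_twistedPow {R V ι : Type*} [CommRing R]
    [AddCommGroup V] [Module R V] [Fintype ι] [DecidableEq ι] {φ : R →+* R}
    (b : Module.Basis ι R V) (T : V →ₛₗ[φ] V) (k : ℕ) (j : ι) :
    T^[k] (b j) =
      ∑ i, Matrix.twistedPow φ (Matrix.of fun i j => b.repr (T (b j)) i) k i j • b i := by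
  induction k generalizing j with
  | zero => simp [Matrix.twistedPow, Matrix.one_apply, ite_smul]
  | succ k ih =>
    rw [Function.iterate_succ_apply', ih, map_sum]
    simp only [LinearMap.map_smulₛₗ, Matrix.twistedPow, Matrix.mul_apply,
      RingHom.mapMatrix_apply, Matrix.map_apply, Matrix.of_apply, sum_smul]
    conv_lhs => enter [2, i]; rw [← b.sum_repr (T (b i)), smul_sum]
    rw [sum_comm]
    refine sum_congr rfl fun l _ => sum_congr rfl fun i _ => ?_
    rw [smul_smul, mul_comm]

theorem exists_prod_iterate_eq_pow_finrank {E V : Type*} [Field E] [AddCommGroup V] [Module E V]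
    [FiniteDimensional E V] {φ : E →+* E} (T : V →ₛₗ[φ] V) {n : ℕ} {c : E}
    (hT : ∀ v, T^[n] v = c • v) :
    ∃ d : E, ∏ i ∈ range n, φ^[i] d = c ^ Module.finrank E V := by
  set b := Module.finBasis E V
  set B : Matrix _ _ E := Matrix.of fun i j => b.repr (T (b j)) i
  have hdiag : Matrix.twistedPow φ B n = Matrix.diagonal fun _ => c := by
    ext i j
    have := (b.iterate_apply_eq_sum_twistedPow T n j).symm.trans (hT _)
    simpa [Finsupp.single_apply, Matrix.diagonal, eq_comm] using congrArg (b.repr · i) this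
  refine ⟨B.det, ?_⟩
  rw [← Matrix.det_twistedPow, hdiag, Matrix.det_diagonal]
  simp

theorem Subgroup.pow_gcd_mem {G : Type*} [Group G] (H : Subgroup G) {g : G} {m n : ℕ}
    (hm : g ^ m ∈ H) (hn : g ^ n ∈ H) : g ^ Nat.gcd m n ∈ H := by
  have hbezout : g ^ (Nat.gcd m n : ℤ) = (g ^ m) ^ Nat.gcdA m n * (g ^ n) ^ Nat.gcdB m n := by
    rw [Nat.gcd_eq_gcd_ab, zpow_add, zpow_mul, zpow_mul, zpow_natCast, zpow_natCast]
  rw [← zpow_natCast, hbezout]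
  exact H.mul_mem (H.zpow_mem hm _) (H.zpow_mem hn _)

namespace AlgEquiv

variable {F E : Type*} [Field F] [Field E] [Algebra F E]

def cyclicNorm (σ : E ≃ₐ[F] E) (n : ℕ) : E →* E where
  toFun e := ∏ i ∈ range n, (σ ^ i) e
  map_one' := by simp
  map_mul' e e' := by simp only [map_mul, prod_mul_distrib]

theorem cyclicNorm_apply (σ : E ≃ₐ[F] E) (n : ℕ) (e : E) :
    σ.cyclicNorm n e = ∏ i ∈ range n, (σ ^ i) e := rfl

theorem cyclicNorm_algebraMap (σ : E ≃ₐ[F] E) (n : ℕ) (c : F) :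
    σ.cyclicNorm n (algebraMap F E c) = algebraMap F E c ^ n := by
  simp [cyclicNorm_apply]

theorem cyclicNorm_zero (σ : E ≃ₐ[F] E) {n : ℕ} (hn : n ≠ 0) : σ.cyclicNorm n 0 = 0 :=
  prod_eq_zero (mem_range.2 (Nat.pos_of_ne_zero hn)) (map_zero _)

/-- The exponents `m` for which `a ^ m` is a norm form a subgroup of `ℤ` containing `n`. -/
theorem exists_cyclicNorm_eq_pow_gcd (σ : E ≃ₐ[F] E) {n m : ℕ} (hn : n ≠ 0) {a : F}
    (ha : a ≠ 0) (h : ∃ e, σ.cyclicNorm n e = algebraMap F E (a ^ m)) :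
    ∃ e, σ.cyclicNorm n e = algebraMap F E (a ^ Nat.gcd m n) := by
  let u : Eˣ := Units.mk0 (algebraMap F E a) ((_root_.map_ne_zero _).2 ha)
  let H := (Units.map (σ.cyclicNorm n)).range
  have hm : u ^ m ∈ H := by
    obtain ⟨e, he⟩ := h
    have he0 : e ≠ 0 := by
      rintro rfl
      rw [cyclicNorm_zero σ hn, eq_comm, _root_.map_eq_zero] at he
      exact pow_ne_zero _ ha he
    exact ⟨Units.mk0 e he0, Units.ext (by simp [u, he])⟩
  have hn : u ^ n ∈ H := ⟨u, Units.ext (by simp [u, cyclicNorm_algebraMap])⟩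
  obtain ⟨v, hv⟩ := H.pow_gcd_mem hm hn
  exact ⟨v, by simpa [u] using congrArg Units.val hv⟩

end AlgEquiv

theorem mul_mem_span_range_pow {E A : Type*} [Semiring E] [Semiring A] [Module E A]
    {φ : E →+* E} {n : ℕ} {c : E} {x : A}
    (hx : ∀ (e : E) (w : A), x * (e • w) = φ e • (x * w))
    (hxn : x ^ n = c • 1) {v : A}
    (hv : v ∈ Submodule.span E (Set.range fun j : Fin n => x ^ (j : ℕ))) :
    x * v ∈ Submodule.span E (Set.range fun j : Fin n => x ^ (j : ℕ)) := by
  set S := Submodule.span E (Set.range fun j : Fin n => x ^ (j : ℕ))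
  have hpow : ∀ j < n, x ^ j ∈ S := fun j hj => Submodule.subset_span ⟨⟨j, hj⟩, rfl⟩
  induction hv using Submodule.span_induction with
  | mem u hu =>
    obtain ⟨j, rfl⟩ := hu
    rw [← pow_succ']
    rcases (show (j : ℕ) + 1 ≤ n from j.2).lt_or_eq with hj | hj
    · exact hpow _ hj
    · rw [hj, hxn]
      exact S.smul_mem _ (pow_zero x ▸ hpow 0 (Nat.zero_lt_of_lt j.2))
  | zero => simp
  | add u w _ _ hu hw => simpa [mul_add] using S.add_mem hu hw
  | smul e u _ hu => simpa [hx] using S.smul_mem (φ e) hu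

theorem isUnit_of_forall_prod_iterate_ne_pow {E A : Type*} [Field E] [Ring A] [Module E A]
    [IsScalarTower E A A] {φ : E →+* E} {n : ℕ} {c : E} {x : A}
    (hx : ∀ (e : E) (w : A), x * (e • w) = φ e • (x * w)) (hxn : x ^ n = c • 1)
    (hspan : Submodule.span E (Set.range fun j : Fin n => x ^ (j : ℕ)) = ⊤)
    (hnorm : ∀ m, 0 < m → m < n → ∀ d : E, ∏ i ∈ range n, φ^[i] d ≠ c ^ m)
    {z : A} (hz : z ≠ 0) : IsUnit z := by
  have : FiniteDimensional E A := ⟨hspan ▸ Submodule.fg_span (Set.finite_range _)⟩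
  have hrank : Module.finrank E A ≤ n := by
    rw [← finrank_top, ← hspan]
    exact (finrank_range_le_card _).trans (by simp)
  -- so `A` is Artinian, hence Dedekind-finite: a left inverse is a two-sided one
  have : IsArtinianRing A := isArtinian_of_tower E inferInstance
  set I := LinearMap.range (LinearMap.mulRight E z)
  by_cases htop : I = ⊤
  · obtain ⟨p, hp⟩ : (1 : A) ∈ I := htop ▸ Submodule.mem_top
    exact IsUnit.of_mul_eq_one_right p hp
  exfalso
  have hpos : 0 < Module.finrank E I := by
    have : Nontrivial I := ⟨⟨⟨z, 1, one_mul z⟩, 0, fun h => hz (congrArg Subtype.val h)⟩⟩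
    exact Module.finrank_pos
  have hlt : Module.finrank E I < n := (Submodule.finrank_lt htop).trans_le hrank
  let L : A →ₛₗ[φ] A := ⟨⟨(x * ·), mul_add x⟩, hx⟩
  have hLI : ∀ v ∈ I, L v ∈ I := by
    rintro _ ⟨w, rfl⟩
    exact ⟨x * w, mul_assoc x w z⟩
  have hsemiconj : Function.Semiconj Subtype.val (L.restrict hLI) L := fun _ => rfl
  obtain ⟨d, hd⟩ := exists_prod_iterate_eq_pow_finrank (L.restrict hLI) (n := n) (c := c)
    fun v => Subtype.ext <| by
      rw [hsemiconj.iterate_right, Submodule.coe_smul]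
      change (x * ·)^[n] v = _
      rw [mul_left_iterate, hxn]
      exact (smul_mul_assoc _ _ _).trans (by rw [one_mul])
  exact hnorm _ hpos hlt d hd

theorem AdjoinRoot.nontrivial_X_pow_sub_C {R : Type*} [CommRing R] [Nontrivial R] {n : ℕ}
    (hn : n ≠ 0) (c : R) : Nontrivial (AdjoinRoot (X ^ n - C c)) := by
  refine Ideal.Quotient.nontrivial_iff.2 fun htop => ?_
  rw [Ideal.span_singleton_eq_top, (monic_X_pow_sub_C c hn).isUnit_iff] at htop
  simpa [hn] using congrArg natDegree htop

theorem AdjoinRoot.root_X_pow_sub_C_pow_eq_algebraMap {R : Type*} [CommRing R] (n : ℕ) (c : R) :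
    root (X ^ n - C c) ^ n = algebraMap R _ c := by
  have := AdjoinRoot.mk_self (f := X ^ n - C c)
  rwa [map_sub, map_pow, AdjoinRoot.mk_X, AdjoinRoot.mk_C, sub_eq_zero] at this

theorem AdjoinRoot.exists_algHom_root_eq_mul_root {R : Type*} [CommRing R] {n : ℕ} (c : R)
    {ζ : R} (hζ : ζ ^ n = 1) :
    ∃ τ : AdjoinRoot (X ^ n - C c) →ₐ[R] AdjoinRoot (X ^ n - C c),
      τ (root _) = algebraMap R _ ζ * root _ ∧ τ ^ n = 1 := by
  have hroot : eval₂ (Algebra.ofId R (AdjoinRoot (X ^ n - C c)) : R →+* AdjoinRoot (X ^ n - C c))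
      (algebraMap R _ ζ * root _) (X ^ n - C c) = 0 := by
    rw [eval₂_sub, eval₂_X_pow, eval₂_C, mul_pow, ← map_pow, hζ, map_one, one_mul,
      root_X_pow_sub_C_pow_eq_algebraMap]
    exact sub_self _
  let τ := liftAlgHom _ (Algebra.ofId R _) _ hroot
  have hpow : ∀ k, (τ ^ k) (root _) = algebraMap R _ ζ ^ k * root (X ^ n - C c) := by
    intro k
    induction k with
    | zero => simp
    | succ k ih =>
      rw [pow_succ', AlgHom.mul_apply, ih, map_mul, map_pow, AlgHom.commutes, liftAlgHom_root]
      ring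
  refine ⟨τ, liftAlgHom_root .., algHom_ext ?_⟩
  rw [hpow, ← map_pow, hζ, map_one, one_mul, AlgHom.one_apply]

namespace CE

variable {F : Type} [Field F] {n : ℕ} {q s a : F}

def h : CE F n q s a := RingQuot.mkAlgHom F (CERel F n q s a) (FreeAlgebra.ι F 0)

def x : CE F n q s a := RingQuot.mkAlgHom F (CERel F n q s a) (FreeAlgebra.ι F 1)

theorem x_mul_h : (x : CE F n q s a) * h = algebraMap F _ q * (h * x) := by
  have := RingQuot.mkAlgHom_rel F (CERel.comm (F := F) (n := n) (q := q) (s := s) (a := a))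
  rwa [map_mul, map_mul, map_mul, AlgHom.commutes] at this

theorem h_pow : (h : CE F n q s a) ^ n = algebraMap F _ s := by
  have := RingQuot.mkAlgHom_rel F (CERel.hpow (F := F) (n := n) (q := q) (s := s) (a := a))
  rwa [map_pow, AlgHom.commutes] at this

theorem x_pow : (x : CE F n q s a) ^ n = algebraMap F _ a := by
  have := RingQuot.mkAlgHom_rel F (CERel.xpow (F := F) (n := n) (q := q) (s := s) (a := a))
  rwa [map_pow, AlgHom.commutes] at this

@[elab_as_elim]
theorem induction_on {P : CE F n q s a → Prop} (w : CE F n q s a)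
    (algebraMap_mem : ∀ c, P (algebraMap F _ c)) (h_mem : P h) (x_mem : P x)
    (add_mem : ∀ u v, P u → P v → P (u + v)) (mul_mem : ∀ u v, P u → P v → P (u * v)) :
    P w := by
  obtain ⟨w, rfl⟩ := RingQuot.mkAlgHom_surjective F (CERel F n q s a) w
  induction w using FreeAlgebra.induction with
  | grade0 c => simpa using algebraMap_mem c
  | grade1 i => fin_cases i; exacts [h_mem, x_mem]
  | mul u v hu hv => simpa using mul_mem _ _ hu hv
  | add u v hu hv => simpa using add_mem _ _ hu hv

def lift {A : Type*} [Semiring A] [Algebra F A] (h₀ x₀ : A)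
    (hxh : x₀ * h₀ = algebraMap F A q * (h₀ * x₀)) (hh : h₀ ^ n = algebraMap F A s)
    (hx : x₀ ^ n = algebraMap F A a) : CE F n q s a →ₐ[F] A :=
  RingQuot.liftAlgHom F ⟨FreeAlgebra.lift F ![h₀, x₀], fun _ _ r => by cases r <;> simpa⟩

def toEnd {W : Type*} [CommRing W] [Algebra F W] (h₀ y : W) (τ : W →ₐ[F] W)
    (hτh : τ h₀ = h₀) (hτy : algebraMap F W q * τ y = y) (hτn : τ ^ n = 1)
    (hh : h₀ ^ n = algebraMap F W s) (hy : y ^ n = algebraMap F W a) :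
    CE F n q s a →ₐ[F] Module.End F W :=
  lift (LinearMap.mulLeft F h₀ * AlgHom.toEnd τ) (LinearMap.mulLeft F y)
    (LinearMap.ext fun w => by
      simp only [Module.End.mul_apply, LinearMap.mulLeft_apply, AlgHom.toEnd_apply,
        AlgHom.toLinearMap_apply, Module.algebraMap_end_apply, map_mul, Algebra.smul_def]
      linear_combination (h₀ * τ w) * hτy.symm)
    (by
      have hcomm : Commute (LinearMap.mulLeft F h₀) (AlgHom.toEnd τ) := LinearMap.ext fun w => by
        simp [hτh]
      rw [hcomm.mul_pow, ← map_pow, hτn, map_one, mul_one, LinearMap.pow_mulLeft, hh]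
      exact LinearMap.ext fun w => by simp [Algebra.smul_def])
    (by
      rw [LinearMap.pow_mulLeft, hy]
      exact LinearMap.ext fun w => by simp [Algebra.smul_def])

theorem nontrivial (hn : n ≠ 0) (hq : q ^ n = 1) : Nontrivial (CE F n q s a) := by
  let E := AdjoinRoot (X ^ n - C s)
  let W := AdjoinRoot (X ^ n - C (algebraMap F E a))
  have : Nontrivial E := AdjoinRoot.nontrivial_X_pow_sub_C hn s
  have : Nontrivial W := AdjoinRoot.nontrivial_X_pow_sub_C hn _
  have hq0 : q ≠ 0 := by rintro rfl; simp [hn] at hq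
  let y : W := AdjoinRoot.root _
  have hy : y ^ n = algebraMap F W a := by
    rw [IsScalarTower.algebraMap_apply F E W]
    exact AdjoinRoot.root_X_pow_sub_C_pow_eq_algebraMap n _
  obtain ⟨τ, hτy, hτn⟩ := AdjoinRoot.exists_algHom_root_eq_mul_root (algebraMap F E a)
    (ζ := algebraMap F E q⁻¹) (by rw [← map_pow, inv_pow, hq, inv_one, map_one])
  have hqτy : algebraMap F W q * τ y = y := by
    rw [hτy, ← IsScalarTower.algebraMap_apply, ← mul_assoc, ← map_mul, mul_inv_cancel₀ hq0,
      map_one, one_mul]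
  have hτn' : τ.restrictScalars F ^ n = 1 := AlgHom.ext fun w => by
    rw [AlgHom.coe_pow, AlgHom.coe_restrictScalars', ← AlgHom.coe_pow, hτn]
    rfl
  have hh : (algebraMap E W (AdjoinRoot.root _)) ^ n = algebraMap F W s := by
    rw [← map_pow, AdjoinRoot.root_X_pow_sub_C_pow_eq_algebraMap,
      ← IsScalarTower.algebraMap_apply]
  exact (toEnd (algebraMap E W (AdjoinRoot.root _)) y (τ.restrictScalars F) (τ.commutes _)
    hqτy hτn' hh hy).toRingHom.domain_nontrivial

noncomputable def ofAdjoinRoot : AdjoinRoot (X ^ n - C s : F[X]) →ₐ[F] CE F n q s a :=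
  Ideal.Quotient.liftₐ _ (aeval h) fun p hp => by
    obtain ⟨p, rfl⟩ := Ideal.mem_span_singleton'.1 hp
    rw [map_mul, map_sub, map_pow, aeval_X, aeval_C, h_pow, sub_self, mul_zero]

theorem ofAdjoinRoot_root :
    ofAdjoinRoot (AdjoinRoot.root (X ^ n - C s)) = (h : CE F n q s a) :=
  (Ideal.Quotient.lift_mk _ _ _).trans (aeval_X _)

noncomputable instance : Module (AdjoinRoot (X ^ n - C s : F[X])) (CE F n q s a) :=
  Module.compHom _ (ofAdjoinRoot : _ →ₐ[F] CE F n q s a).toRingHom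

theorem smul_def (e : AdjoinRoot (X ^ n - C s : F[X])) (w : CE F n q s a) :
    e • w = ofAdjoinRoot e * w := rfl

instance : IsScalarTower (AdjoinRoot (X ^ n - C s : F[X])) (CE F n q s a) (CE F n q s a) :=
  ⟨fun _ _ _ => mul_assoc _ _ _⟩

theorem x_pow_eq_smul_one :
    (x : CE F n q s a) ^ n = algebraMap F (AdjoinRoot (X ^ n - C s : F[X])) a • 1 := by
  rw [smul_def, AlgHom.commutes, mul_one, x_pow]

variable (σ : AdjoinRoot (X ^ n - C s : F[X]) →ₐ[F] AdjoinRoot (X ^ n - C s : F[X]))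
  (hσ : σ (AdjoinRoot.root _) = algebraMap F _ q * AdjoinRoot.root (X ^ n - C s : F[X]))
include hσ

theorem x_mul_ofAdjoinRoot (e : AdjoinRoot (X ^ n - C s : F[X])) :
    (x : CE F n q s a) * ofAdjoinRoot e = ofAdjoinRoot (σ e) * x := by
  have he : e ∈ Algebra.adjoin F {AdjoinRoot.root (X ^ n - C s)} := by
    rw [AdjoinRoot.adjoinRoot_eq_top]
    trivial
  induction he using Algebra.adjoin_induction with
  | mem e he =>
    rw [Set.mem_singleton_iff.1 he, hσ, map_mul, AlgHom.commutes, ofAdjoinRoot_root, x_mul_h,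
      mul_assoc]
  | algebraMap c => simp only [AlgHom.commutes, Algebra.commutes]
  | add u v _ _ hu hv => simp only [map_add, mul_add, add_mul, hu, hv]
  | mul u v _ _ hu hv => rw [map_mul, map_mul, map_mul, ← mul_assoc, hu, mul_assoc, hv, mul_assoc]

theorem x_mul_smul (e : AdjoinRoot (X ^ n - C s : F[X])) (w : CE F n q s a) :
    x * (e • w) = σ e • (x * w) := by
  rw [smul_def, smul_def, ← mul_assoc, x_mul_ofAdjoinRoot σ hσ, mul_assoc]

theorem span_range_x_pow (hn : n ≠ 0) :
    Submodule.span (AdjoinRoot (X ^ n - C s : F[X]))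
      (Set.range fun j : Fin n => (x : CE F n q s a) ^ (j : ℕ)) = ⊤ := by
  set S := Submodule.span (AdjoinRoot (X ^ n - C s : F[X]))
    (Set.range fun j : Fin n => (x : CE F n q s a) ^ (j : ℕ))
  have hmul : ∀ w, ∀ v ∈ S, w * v ∈ S := fun w => by
    induction w using induction_on with
    | algebraMap_mem c =>
      intro v hv
      simpa only [smul_def, AlgHom.commutes] using S.smul_mem (algebraMap F _ c) hv
    | h_mem =>
      intro v hv
      simpa only [smul_def, ofAdjoinRoot_root] using S.smul_mem (AdjoinRoot.root _) hv
    | x_mem => exact fun v => mul_mem_span_range_pow (φ := σ) (x_mul_smul σ hσ) x_pow_eq_smul_one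
    | add_mem u w hu hw => exact fun v hv => add_mul u w v ▸ S.add_mem (hu v hv) (hw v hv)
    | mul_mem u w hu hw => exact fun v hv => (mul_assoc u w v).symm ▸ hu _ (hw v hv)
  have hone : (1 : CE F n q s a) ∈ S :=
    pow_zero (x : CE F n q s a) ▸ Submodule.subset_span ⟨⟨0, Nat.pos_of_ne_zero hn⟩, rfl⟩
  exact eq_top_iff.2 fun w _ => mul_one w ▸ hmul w 1 hone

end CE

theorem stmt_9_general (F : Type) [Field F] (n : ℕ) (hn : 2 ≤ n) (q : F)
    (hq : IsPrimitiveRoot q n) (s a : F) (ha : a ≠ 0)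
    (hfield : IsField (AdjoinRoot (X ^ n - C s : F[X])))
    (σ : AdjoinRoot (X ^ n - C s : F[X]) ≃ₐ[F] AdjoinRoot (X ^ n - C s : F[X]))
    (hσ : σ (AdjoinRoot.root (X ^ n - C s : F[X])) =
      algebraMap F (AdjoinRoot (X ^ n - C s : F[X])) q * AdjoinRoot.root (X ^ n - C s : F[X]))
    (hnorm : ∀ d' : ℕ, d' ∣ n → d' ≠ n →
      ¬ ∃ e : AdjoinRoot (X ^ n - C s : F[X]),
        ∏ i ∈ Finset.range n, (σ ^ i) e =
          algebraMap F (AdjoinRoot (X ^ n - C s : F[X])) (a ^ d')) :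
    Nontrivial (CE F n q s a) ∧ ∀ z : CE F n q s a, z ≠ 0 → IsUnit z := by
  have hn0 : n ≠ 0 := by omega
  refine ⟨CE.nontrivial hn0 hq.pow_eq_one, fun z hz => ?_⟩
  let : Field (AdjoinRoot (X ^ n - C s : F[X])) := hfield.toField
  refine isUnit_of_forall_prod_iterate_ne_pow (φ := σ.toAlgHom.toRingHom)
    (CE.x_mul_smul σ.toAlgHom hσ) CE.x_pow_eq_smul_one (CE.span_range_x_pow σ.toAlgHom hσ hn0)
    (fun m hm hmn d hd => ?_) hz
  obtain ⟨e, he⟩ := σ.exists_cyclicNorm_eq_pow_gcd hn0 ha ⟨d, by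
    simpa [AlgEquiv.cyclicNorm_apply] using hd⟩
  exact hnorm _ (Nat.gcd_dvd_right m n) ((Nat.gcd_le_left n hm).trans_lt hmn).ne ⟨e, he⟩

/-- Let `F` be a field, `n ≥ 2`, `q ∈ F` a primitive `n`-th root of unity,
`s, a ∈ F` nonzero, `E(s) = F[X]/(X^n − s)` a field, and `σ` the `F`-algebra automorphism of
`E(s)` with `σ(h) = q·h` (`h` the root). If for every divisor `d'` of `n` with `d' ≠ n` the
element `a^{d'}` is not a norm, i.e. not of the form `∏_{i=0}^{n−1} σ^i(e)` for `e ∈ E(s)`,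
then `𝓔 = (E(s), σ, a)` is a division ring. -/
theorem stmt_9 (F : Type) [Field F] (n : ℕ) (hn : 2 ≤ n) (q : F)
    (hq : IsPrimitiveRoot q n) (s a : F) (hs : s ≠ 0) (ha : a ≠ 0)
    (hfield : IsField (AdjoinRoot (X ^ n - C s : F[X])))
    (σ : AdjoinRoot (X ^ n - C s : F[X]) ≃ₐ[F] AdjoinRoot (X ^ n - C s : F[X]))
    (hσ : σ (AdjoinRoot.root (X ^ n - C s : F[X])) =
      algebraMap F (AdjoinRoot (X ^ n - C s : F[X])) q * AdjoinRoot.root (X ^ n - C s : F[X]))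
    (hnorm : ∀ d' : ℕ, d' ∣ n → d' ≠ n →
      ¬ ∃ e : AdjoinRoot (X ^ n - C s : F[X]),
        ∏ i ∈ Finset.range n, (σ ^ i) e =
          algebraMap F (AdjoinRoot (X ^ n - C s : F[X])) (a ^ d')) :
    Nontrivial (CE F n q s a) ∧ ∀ z : CE F n q s a, z ≠ 0 → IsUnit z :=
  stmt_9_general F n hn q hq s a ha hfield σ hσ hnorm
end

section
/- Let R be a ring that is free as a module over its center Z(R). Then for every maximal ideal 𝔪 of Z(R) there exists a simple left R-module M such that the contraction of the annihilator of M to the center equals 𝔪, i.e., {z ∈ Z(R) : z·m = 0 for all m ∈ M} = 𝔪. -/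
universe u

/-!
Extend `𝔪` to the left ideal `𝔪R` of `R`. Since `R` is a free, hence faithfully flat, module
over its center, `𝔪R ≠ R`, so `𝔪R` lies in a maximal left ideal `P`, and `M = R ⧸ P` is simple.
A central element `z` kills `M` exactly when `z ∈ P`, and `P ∩ Z(R)` is a proper ideal
containing the maximal ideal `𝔪`, hence equal to it.
-/

namespace Ideal

variable {Z A : Type*} [CommRing Z] [Ring A] [Algebra Z A]

theorem restrictScalars_map_algebraMap_le_smul_top (I : Ideal Z) :
    (I.map (algebraMap Z A)).restrictScalars Z ≤ I • ⊤ := by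
  have mul_mem (a x : A) (hx : x ∈ I • (⊤ : Submodule Z A)) :
      a * x ∈ I • (⊤ : Submodule Z A) := by
    refine Submodule.smul_induction_on hx (fun z hz y _ => ?_) (fun x y hx hy => ?_)
    · rw [mul_smul_comm]
      exact Submodule.smul_mem_smul hz trivial
    · rw [mul_add]
      exact add_mem hx hy
  intro x hx
  induction hx using Submodule.span_induction with
  | mem x hx =>
    obtain ⟨z, hz, rfl⟩ := hx
    rw [Algebra.algebraMap_eq_smul_one]
    exact Submodule.smul_mem_smul hz trivial
  | zero => exact zero_mem _
  | add x y _ _ hx hy => exact add_mem hx hy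
  | smul a x _ hx => exact mul_mem a x hx

theorem map_algebraMap_ne_top [Module.FaithfullyFlat Z A] {I : Ideal Z} (hI : I ≠ ⊤) :
    I.map (algebraMap Z A) ≠ ⊤ := by
  intro h
  refine (Module.FaithfullyFlat.iff_flat_and_proper_ideal Z A).1 inferInstance |>.2 I hI ?_
  have hle := restrictScalars_map_algebraMap_le_smul_top (A := A) I
  rwa [h, Submodule.restrictScalars_top, top_le_iff] at hle

end Ideal

theorem Submodule.Quotient.forall_smul_eq_zero_iff_mem_of_mem_center {A : Type*} [Ring A]
    {P : Submodule A A} {a : A} (ha : a ∈ Set.center A) :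
    (∀ m : A ⧸ P, a • m = 0) ↔ a ∈ P := by
  refine ⟨fun h => by simpa [← mk_smul, mk_eq_zero] using h (mk 1), fun haP m => ?_⟩
  obtain ⟨r, rfl⟩ := mk_surjective P m
  rw [← mk_smul, mk_eq_zero, smul_eq_mul, (Set.mem_center_iff.mp ha).comm r]
  exact P.smul_mem r haP

/-- Let `R` be a ring that is free as a module over its center `Z(R)`. Then
for every maximal ideal `𝔪` of `Z(R)` there is a simple left `R`-module `M` such that the
contraction of `ann_R(M)` to the center is exactly `𝔪`, i.e.
`{z ∈ Z(R) : z·m = 0 for all m ∈ M} = 𝔪`. -/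
theorem stmt_16 (R : Type u) [Ring R] (hfree : Module.Free (Subring.center R) R)
    (𝔪 : Ideal (Subring.center R)) (hmax : 𝔪.IsMaximal) :
    ∃ (M : Type u) (_ : AddCommGroup M) (_ : Module R M),
      IsSimpleModule R M ∧
      ∀ z : Subring.center R, (∀ m : M, (z : R) • m = 0) ↔ z ∈ 𝔪 := by
  have : Nontrivial (Subring.center R) :=
    nontrivial_of_ne 1 0 fun h => hmax.ne_top ((Ideal.eq_top_iff_one 𝔪).2 (h ▸ 𝔪.zero_mem))
  have : Nontrivial R := (Subtype.val_injective (p := (· ∈ Subring.center R))).nontrivial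
  obtain ⟨P, hP, h𝔪P⟩ :=
    Ideal.exists_le_maximal _ (Ideal.map_algebraMap_ne_top (A := R) hmax.ne_top)
  have hcomap : P.comap (algebraMap (Subring.center R) R) = 𝔪 :=
    (hmax.eq_of_le (Ideal.comap_ne_top _ hP.ne_top) (Ideal.map_le_iff_le_comap.1 h𝔪P)).symm
  refine ⟨R ⧸ P, inferInstance, inferInstance, isSimpleModule_iff_isCoatom.mpr hP.out,
    fun z => ?_⟩
  rw [Submodule.Quotient.forall_smul_eq_zero_iff_mem_of_mem_center z.2, ← hcomap]
  rfl
end
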